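/- arXiv:2603.05794 — 3 statements merged into one kernel-verified Lean document; each statement's English description precedes it below -/
import Mathlib

section
/- Let A be a real symmetric k×k matrix with spectral decomposition A = Σ_{j=1}^k λ_j q_j q_jᵀ, where λ₁ ≥ ⋯ ≥ λ_k, λ_r > λ_{r+1}, and q₁,…,q_k are orthonormal. Then M = Σ_{j=1}^r q_j q_jᵀ is the unique minimizer of ‖A − Y‖_F over the Grassmann manifold G_{k,r} = {Y ∈ ℝ^{k×k} : Yᵀ = Y = Y², tr(Y) = r}. -/
open Matrix

/-- The Frobenius norm of a real matrix. -/
noncomputable def frob {k r : ℕ} (A : Matrix (Fin k) (Fin r) ℝ) : ℝ :=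
  Real.sqrt ((Aᵀ * A).trace)


namespace GA

lemma trace_nonneg {k : ℕ} (X : Matrix (Fin k) (Fin k) ℝ) :
    0 ≤ (Xᵀ * X).trace := by
  classical
  simp only [Matrix.trace, Matrix.diag, Matrix.mul_apply, Matrix.transpose_apply]
  exact Finset.sum_nonneg fun j _ => Finset.sum_nonneg fun i _ => mul_self_nonneg _

lemma frob_le {k : ℕ} {X Y : Matrix (Fin k) (Fin k) ℝ}
    (h : (Xᵀ * X).trace ≤ (Yᵀ * Y).trace) : frob X ≤ frob Y :=
  Real.sqrt_le_sqrt h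

lemma frob_eq_iff {k : ℕ} {X Y : Matrix (Fin k) (Fin k) ℝ}
    (h : frob X = frob Y) : (Xᵀ * X).trace = (Yᵀ * Y).trace := by
  have h1 := Real.sq_sqrt (trace_nonneg X)
  have h2 := Real.sq_sqrt (trace_nonneg Y)
  unfold frob at h
  rw [← h1, ← h2, h]

lemma trace_conj {k : ℕ} (U X : Matrix (Fin k) (Fin k) ℝ) (hU : Uᵀ * U = 1) :
    ((U * X * Uᵀ)ᵀ * (U * X * Uᵀ)).trace = (Xᵀ * X).trace := by
  have : (U * X * Uᵀ)ᵀ * (U * X * Uᵀ) = U * (Xᵀ * X) * Uᵀ := by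
    have key : Uᵀ * (U * (X * Uᵀ)) = X * Uᵀ := by
      rw [← Matrix.mul_assoc, hU, Matrix.one_mul]
    simp only [transpose_mul, transpose_transpose, Matrix.mul_assoc]
    rw [key]
  rw [this, Matrix.trace_mul_comm, ← Matrix.mul_assoc, hU, Matrix.one_mul]

lemma trace_diag_mul {k : ℕ} (d : Fin k → ℝ) (X : Matrix (Fin k) (Fin k) ℝ) :
    (Matrix.diagonal d * X).trace = ∑ i, d i * X i i := by
  simp [Matrix.trace, Matrix.diag, Matrix.diagonal_mul]



lemma sum_p (k r : ℕ) (hrk : r < k) :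
    ∑ i : Fin k, (if (i : ℕ) < r then (1:ℝ) else 0) = r := by
  rw [Fin.sum_univ_eq_sum_range (fun i => if i < r then (1:ℝ) else 0) k]
  rw [← Finset.sum_subset (Finset.range_subset_range.2 hrk.le)
    (fun x _ hx => by simp at hx ⊢; omega)]
  rw [Finset.sum_congr rfl (fun x hx => if_pos (Finset.mem_range.1 hx))]
  simp

lemma key_lemma (k r : ℕ) (hr : 1 ≤ r) (hrk : r < k)
    (lam : Fin k → ℝ)
    (hdec : ∀ i j : Fin k, i ≤ j → lam j ≤ lam i)
    (hgap : lam ⟨r, hrk⟩ < lam ⟨r - 1, lt_trans (Nat.sub_lt hr Nat.one_pos) hrk⟩)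
    (t : Fin k → ℝ) (ht0 : ∀ i, 0 ≤ t i) (ht1 : ∀ i, t i ≤ 1)
    (htr : ∑ i, t i = r) :
    (∑ i, lam i * t i ≤ ∑ i, lam i * (if (i : ℕ) < r then 1 else 0)) ∧
    (∑ i, lam i * t i = ∑ i, lam i * (if (i : ℕ) < r then 1 else 0) →
      ∀ i, t i = if (i : ℕ) < r then 1 else 0) := by
  classical
  set c := lam ⟨r, hrk⟩ with hc
  set p : Fin k → ℝ := fun i => if (i : ℕ) < r then 1 else 0 with hp
  have hp0 : ∀ i, 0 ≤ p i := by intro i; simp only [hp]; split <;> norm_num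
  have hsp : ∑ i, p i = r := sum_p k r hrk
  have hterm : ∀ i ∈ Finset.univ, (lam i - c) * t i ≤ (lam i - c) * p i := by
    intro i _
    by_cases hi : (i : ℕ) < r
    · have hci : c ≤ lam i := hdec i ⟨r, hrk⟩ (by simp [Fin.le_def]; omega)
      simp only [hp, if_pos hi]
      nlinarith [ht1 i]
    · have hic : lam i ≤ c := hdec ⟨r, hrk⟩ i (by simp [Fin.le_def]; omega)
      simp only [hp, if_neg hi, mul_zero]
      exact mul_nonpos_of_nonpos_of_nonneg (by linarith) (ht0 i)
  have e1 : ∀ u : Fin k → ℝ,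
      ∑ i, (lam i - c) * u i = ∑ i, lam i * u i - c * ∑ i, u i := by
    intro u
    simp [sub_mul, Finset.sum_sub_distrib, Finset.mul_sum]
  have hsum := Finset.sum_le_sum hterm
  rw [e1 t, e1 p, htr, hsp] at hsum
  constructor
  · linarith
  · intro hEq
    have hEq' : ∑ i, (lam i - c) * t i = ∑ i, (lam i - c) * p i := by
      rw [e1 t, e1 p, htr, hsp, hEq]
    have hall := (Finset.sum_eq_sum_iff_of_le hterm).1 hEq'
    have hlt1 : ∀ i : Fin k, (i : ℕ) < r → t i = 1 := by
      intro i hi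
      have h1 := hall i (Finset.mem_univ i)
      have hpos : 0 < lam i - c := by
        have : lam ⟨r - 1, lt_trans (Nat.sub_lt hr Nat.one_pos) hrk⟩ ≤ lam i :=
          hdec i _ (by simp [Fin.le_def]; omega)
        linarith
      simp only [hp, if_pos hi, mul_one] at h1
      exact mul_left_cancel₀ (ne_of_gt hpos) (by rw [mul_one]; exact h1)
    have hfsum : ∑ i ∈ Finset.univ.filter (fun i : Fin k => (i : ℕ) < r), t i = r := by
      rw [Finset.sum_filter]
      calc ∑ i : Fin k, (if (i : ℕ) < r then t i else 0)
          = ∑ i : Fin k, p i := by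
            apply Finset.sum_congr rfl
            intro i _
            simp only [hp]
            split
            · exact hlt1 i (by assumption)
            · rfl
        _ = r := hsp
    have hrest : ∑ i ∈ Finset.univ.filter (fun i : Fin k => ¬ (i : ℕ) < r), t i = 0 := by
      have := Finset.sum_filter_add_sum_filter_not Finset.univ (fun i : Fin k => (i : ℕ) < r) t
      rw [hfsum, htr] at this
      linarith
    have hzero : ∀ i ∈ Finset.univ.filter (fun i : Fin k => ¬ (i : ℕ) < r), t i = 0 :=
      (Finset.sum_eq_zero_iff_of_nonneg (fun i _ => ht0 i)).1 hrest
    intro i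
    by_cases hi : (i : ℕ) < r
    · rw [if_pos hi]; exact hlt1 i hi
    · rw [if_neg hi]; exact hzero i (Finset.mem_filter.2 ⟨Finset.mem_univ i, hi⟩)



lemma proj_sq {k : ℕ} (Z : Matrix (Fin k) (Fin k) ℝ) (hs : Zᵀ = Z)
    (h2 : Z * Z = Z) : ∀ i, Z i i = ∑ j, (Z i j) ^ 2 := by
  intro i
  have h := congrArg (fun W : Matrix (Fin k) (Fin k) ℝ => W i i) h2
  simp only [Matrix.mul_apply] at h
  rw [← h]
  apply Finset.sum_congr rfl
  intro j _
  have hj : Z j i = Z i j := by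
    conv_lhs => rw [← hs, Matrix.transpose_apply]
  rw [hj]; ring

lemma proj_diag_mem {k : ℕ} (Z : Matrix (Fin k) (Fin k) ℝ) (hs : Zᵀ = Z)
    (h2 : Z * Z = Z) (i : Fin k) : 0 ≤ Z i i ∧ Z i i ≤ 1 := by
  have hsq := proj_sq Z hs h2 i
  have h0 : 0 ≤ Z i i := by
    rw [hsq]; exact Finset.sum_nonneg fun j _ => sq_nonneg _
  refine ⟨h0, ?_⟩
  have hle : (Z i i) ^ 2 ≤ Z i i := by
    conv_rhs => rw [hsq]
    exact Finset.single_le_sum (fun j _ => sq_nonneg (Z i j)) (Finset.mem_univ i)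
  nlinarith

lemma proj_eq_diagonal {k r : ℕ} (Z : Matrix (Fin k) (Fin k) ℝ) (hs : Zᵀ = Z)
    (h2 : Z * Z = Z) (hd : ∀ i, Z i i = if (i : ℕ) < r then 1 else 0) :
    Z = Matrix.diagonal (fun i : Fin k => if (i : ℕ) < r then (1:ℝ) else 0) := by
  classical
  have hsq := proj_sq Z hs h2
  have hrow0 : ∀ i : Fin k, ¬ ((i : ℕ) < r) → ∀ j, Z i j = 0 := by
    intro i hi j
    have h0 : ∑ j, (Z i j) ^ 2 = 0 := by rw [← hsq i, hd i, if_neg hi]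
    have := (Finset.sum_eq_zero_iff_of_nonneg fun j _ => sq_nonneg (Z i j)).1 h0
      j (Finset.mem_univ j)
    exact pow_eq_zero_iff two_ne_zero |>.1 this
  have hrow1 : ∀ i : Fin k, (i : ℕ) < r → ∀ j, j ≠ i → Z i j = 0 := by
    intro i hi j hj
    have hZii : Z i i = 1 := by rw [hd i, if_pos hi]
    have h1 : ∑ j, (Z i j) ^ 2 = 1 := by rw [← hsq i, hZii]
    have he : ∑ j ∈ Finset.univ.erase i, (Z i j) ^ 2 = 0 := by
      have hadd := Finset.add_sum_erase Finset.univ (fun j => (Z i j) ^ 2)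
        (Finset.mem_univ i)
      simp only [h1, hZii] at hadd
      nlinarith [hadd]
    have := (Finset.sum_eq_zero_iff_of_nonneg fun j _ => sq_nonneg (Z i j)).1 he
      j (Finset.mem_erase.2 ⟨hj, Finset.mem_univ j⟩)
    exact pow_eq_zero_iff two_ne_zero |>.1 this
  ext i j
  rw [Matrix.diagonal_apply]
  by_cases hij : i = j
  · subst hij; rw [if_pos rfl, hd]
  · rw [if_neg hij]
    by_cases hi : (i : ℕ) < r
    · exact hrow1 i hi j fun h => hij h.symm
    · exact hrow0 i hi j

lemma trace_expand {k : ℕ} (D X : Matrix (Fin k) (Fin k) ℝ) (hD : Dᵀ = D)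
    (hX : Xᵀ = X) (hX2 : X * X = X) :
    ((D - X)ᵀ * (D - X)).trace = (D * D).trace - 2 * (D * X).trace + X.trace := by
  rw [transpose_sub, hD, hX, Matrix.sub_mul, Matrix.mul_sub, Matrix.mul_sub, hX2]
  rw [Matrix.trace_sub, Matrix.trace_sub, Matrix.trace_sub, Matrix.trace_mul_comm X D]
  ring

end GA

/-- Let A = Σ_{j=1}^k λ_j q_j q_jᵀ with λ₁ ≥ ⋯ ≥ λ_k, λ_r > λ_{r+1},
and q₁,…,q_k orthonormal. Then M = Σ_{j=1}^r q_j q_jᵀ is the unique minimizer of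
‖A − Y‖_F over the Grassmann manifold G_{k,r} = {Y : Yᵀ = Y = Y², tr(Y) = r}. -/
theorem grassmann_projection_unique (k r : ℕ) (hr : 1 ≤ r) (hrk : r < k)
    (lam : Fin k → ℝ) (q : Fin k → Fin k → ℝ)
    (horth : ∀ i j : Fin k, q i ⬝ᵥ q j = if i = j then 1 else 0)
    (hdec : ∀ i j : Fin k, i ≤ j → lam j ≤ lam i)
    (hgap : lam ⟨r, hrk⟩ < lam ⟨r - 1, lt_trans (Nat.sub_lt hr Nat.one_pos) hrk⟩)
    (A : Matrix (Fin k) (Fin k) ℝ)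
    (hA : A = ∑ j : Fin k, lam j • vecMulVec (q j) (q j))
    (M : Matrix (Fin k) (Fin k) ℝ)
    (hM : M = ∑ j ∈ Finset.univ.filter (fun j : Fin k => (j : ℕ) < r),
      vecMulVec (q j) (q j)) :
    (Mᵀ = M ∧ M * M = M ∧ M.trace = (r : ℝ)) ∧
      ∀ Y : Matrix (Fin k) (Fin k) ℝ, (Yᵀ = Y ∧ Y * Y = Y ∧ Y.trace = (r : ℝ)) →
        frob (A - M) ≤ frob (A - Y) ∧ (frob (A - Y) = frob (A - M) → Y = M) := by
  classical
  set Q : Matrix (Fin k) (Fin k) ℝ := Matrix.of fun i j => q j i with hQdef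
  have hQapp : ∀ i j, Q i j = q j i := fun i j => rfl
  have hQ : Qᵀ * Q = 1 := by
    ext i j
    have h := horth i j
    simp only [dotProduct] at h
    simp only [Matrix.mul_apply, Matrix.transpose_apply, hQapp, Matrix.one_apply]
    exact h
  have hQ' : Q * Qᵀ = 1 := mul_eq_one_comm.mp hQ
  set p : Fin k → ℝ := fun i => if (i : ℕ) < r then 1 else 0 with hpdef
  set P : Matrix (Fin k) (Fin k) ℝ := Matrix.diagonal p with hPdef
  set D : Matrix (Fin k) (Fin k) ℝ := Matrix.diagonal lam with hDdef
  have hAD : A = Q * D * Qᵀ := by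
    rw [hA, hDdef, Matrix.mul_assoc]
    ext a b
    simp only [Matrix.sum_apply, Matrix.smul_apply, Matrix.vecMulVec_apply, smul_eq_mul,
      Matrix.mul_apply, Matrix.transpose_apply, hQapp, Matrix.diagonal_apply, ite_mul,
      zero_mul, Finset.sum_ite_eq, Finset.mem_univ, if_true]
    exact Finset.sum_congr rfl fun x _ => by ring
  have hMP : M = Q * P * Qᵀ := by
    rw [hM, hPdef, Matrix.mul_assoc]
    ext a b
    simp only [Matrix.sum_apply, Matrix.vecMulVec_apply, Matrix.mul_apply,
      Matrix.transpose_apply, hQapp, Matrix.diagonal_apply, ite_mul,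
      zero_mul, Finset.sum_ite_eq, Finset.mem_univ, if_true]
    rw [Finset.sum_filter]
    refine Finset.sum_congr rfl fun x _ => ?_
    simp only [hpdef]
    split <;> ring
  have hPs : Pᵀ = P := by rw [hPdef]; exact Matrix.diagonal_transpose p
  have hP2 : P * P = P := by
    rw [hPdef, Matrix.diagonal_mul_diagonal]
    ext i j
    by_cases h : (i : ℕ) < r <;> simp [Matrix.diagonal_apply, hpdef, h]
  have hPt : P.trace = (r : ℝ) := by
    rw [hPdef, Matrix.trace_diagonal]
    exact GA.sum_p k r hrk
  have hDs : Dᵀ = D := by rw [hDdef]; exact Matrix.diagonal_transpose lam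
  have hconjs : ∀ X : Matrix (Fin k) (Fin k) ℝ, Xᵀ = X → (Q * X * Qᵀ)ᵀ = Q * X * Qᵀ := by
    intro X hX
    simp [Matrix.transpose_mul, Matrix.transpose_transpose, hX, Matrix.mul_assoc]
  have hconj2 : ∀ X W : Matrix (Fin k) (Fin k) ℝ,
      (Q * X * Qᵀ) * (Q * W * Qᵀ) = Q * (X * W) * Qᵀ := by
    intro X W
    calc (Q * X * Qᵀ) * (Q * W * Qᵀ) = Q * (X * ((Qᵀ * Q) * (W * Qᵀ))) := by
          simp only [Matrix.mul_assoc]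
      _ = Q * (X * W) * Qᵀ := by rw [hQ]; simp only [Matrix.one_mul, Matrix.mul_assoc]
  have hconjtr : ∀ X : Matrix (Fin k) (Fin k) ℝ, (Q * X * Qᵀ).trace = X.trace := by
    intro X
    rw [Matrix.trace_mul_comm, ← Matrix.mul_assoc, hQ, Matrix.one_mul]
  refine ⟨⟨?_, ?_, ?_⟩, ?_⟩
  · rw [hMP]; exact hconjs P hPs
  · rw [hMP, hconj2, hP2]
  · rw [hMP, hconjtr, hPt]
  intro Y hY
  obtain ⟨hYs, hY2, hYt⟩ := hY
  set Z : Matrix (Fin k) (Fin k) ℝ := Qᵀ * Y * Q with hZdef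
  have hYZ : Y = Q * Z * Qᵀ := by
    rw [hZdef]
    calc Y = (Q * Qᵀ) * Y * (Q * Qᵀ) := by rw [hQ', Matrix.one_mul, Matrix.mul_one]
      _ = Q * (Qᵀ * Y * Q) * Qᵀ := by simp only [Matrix.mul_assoc]
  have hZs : Zᵀ = Z := by
    rw [hZdef]
    simp [Matrix.transpose_mul, Matrix.transpose_transpose, hYs, Matrix.mul_assoc]
  have hZ2 : Z * Z = Z := by
    rw [hZdef]
    calc (Qᵀ * Y * Q) * (Qᵀ * Y * Q) = Qᵀ * (Y * ((Q * Qᵀ) * (Y * Q))) := by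
          simp only [Matrix.mul_assoc]
      _ = Qᵀ * (Y * (Y * Q)) := by rw [hQ', Matrix.one_mul]
      _ = Qᵀ * ((Y * Y) * Q) := by rw [Matrix.mul_assoc]
      _ = Qᵀ * Y * Q := by rw [hY2, Matrix.mul_assoc]
  have hZt : Z.trace = (r : ℝ) := by
    rw [hZdef, Matrix.trace_mul_comm, ← Matrix.mul_assoc, hQ', Matrix.one_mul, hYt]
  have hAY : A - Y = Q * (D - Z) * Qᵀ := by
    rw [hAD]
    conv_lhs => rw [hYZ]
    rw [← Matrix.sub_mul, ← Matrix.mul_sub]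
  have hAM : A - M = Q * (D - P) * Qᵀ := by
    rw [hAD]
    conv_lhs => rw [hMP]
    rw [← Matrix.sub_mul, ← Matrix.mul_sub]
  have hTY : ((A - Y)ᵀ * (A - Y)).trace = ((D - Z)ᵀ * (D - Z)).trace := by
    rw [hAY]; exact GA.trace_conj Q (D - Z) hQ
  have hTM : ((A - M)ᵀ * (A - M)).trace = ((D - P)ᵀ * (D - P)).trace := by
    rw [hAM]; exact GA.trace_conj Q (D - P) hQ
  have hEZ := GA.trace_expand D Z hDs hZs hZ2
  have hEP := GA.trace_expand D P hDs hPs hP2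
  have hDZ : (D * Z).trace = ∑ i, lam i * Z i i := by
    rw [hDdef]; exact GA.trace_diag_mul lam Z
  have hDP : (D * P).trace = ∑ i, lam i * p i := by
    rw [hDdef, GA.trace_diag_mul]
    exact Finset.sum_congr rfl fun i _ => by rw [hPdef, Matrix.diagonal_apply_eq]
  have hmem := fun i => GA.proj_diag_mem Z hZs hZ2 i
  have htr : ∑ i, Z i i = (r : ℝ) := by
    rw [← hZt]; simp [Matrix.trace, Matrix.diag]
  have hkey := GA.key_lemma k r hr hrk lam hdec hgap (fun i => Z i i)
    (fun i => (hmem i).1) (fun i => (hmem i).2) htr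
  have hle : ∑ i, lam i * Z i i ≤ ∑ i, lam i * p i := by
    simpa [hpdef] using hkey.1
  have htrineq : ((D - P)ᵀ * (D - P)).trace ≤ ((D - Z)ᵀ * (D - Z)).trace := by
    rw [hEZ, hEP, hDZ, hDP, hPt, hZt]
    linarith
  constructor
  · simp only [frob]
    rw [hTM, hTY]
    exact Real.sqrt_le_sqrt htrineq
  · intro hfe
    have h0 := GA.frob_eq_iff hfe
    rw [hTY, hTM, hEZ, hEP, hDZ, hDP, hPt, hZt] at h0
    have hsumeq : ∑ i, lam i * Z i i = ∑ i, lam i * p i := by linarith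
    have hdd := hkey.2 (by simpa [hpdef] using hsumeq)
    have hZP : Z = P := by
      rw [hPdef, hpdef]
      exact GA.proj_eq_diagonal Z hZs hZ2 hdd
    rw [hYZ, hZP]
    exact hMP.symm
end

section
/- Let A be a k×k complex Hermitian matrix with spectral decomposition A = Σ_{j=1}^k λ_j u_j u_j*, where λ₁ > λ₂ ≥ ⋯ ≥ λ_k and the u_j are orthonormal complex unit vectors. Then M = u₁u₁* is the unique minimizer of ‖A − Z‖_F over CP^{k−1} = {Z ∈ ℂ^{k×k} : Z* = Z = Z², tr(Z) = 1}. -/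
/-!
For a trace-one orthogonal projection `Z`,
`‖A - Z‖_F² = ‖A‖_F² + 1 - 2 Re tr(AZ)`, so minimizing the distance means maximizing
`Re tr(AZ) = ∑ⱼ λⱼ ⟪uⱼ, Z uⱼ⟫`. The weights `⟪uⱼ, Z uⱼ⟫ = ‖Z uⱼ‖²` are nonnegative and sum to
`tr Z = 1`, so this is at most `λ₁`, with equality only if `Z uⱼ = 0` for every `j` with
`λⱼ < λ₁`. Under the gap this forces `Z uⱼ = 0` for `j ≠ 1`, hence `⟪u₁, Z u₁⟫ = 1`; the same
positivity applied to the projection `1 - Z` gives `Z u₁ = u₁`, i.e. `Z = u₁u₁*`.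
-/

open Matrix

/-- The Frobenius norm of a complex matrix. -/
noncomputable def frobC {k : ℕ} (A : Matrix (Fin k) (Fin k) ℂ) : ℝ :=
  Real.sqrt (((Aᴴ * A).trace).re)

open scoped ComplexOrder

theorem Finset.sum_mul_le_of_sum_eq_one {ι : Type*} [Fintype ι] {w f : ι → ℝ} {m : ℝ}
    (hw : ∀ i, 0 ≤ w i) (hsum : ∑ i, w i = 1) (hf : ∀ i, f i ≤ m) : ∑ i, f i * w i ≤ m :=
  calc ∑ i, f i * w i ≤ ∑ i, m * w i :=
        Finset.sum_le_sum fun i _ => mul_le_mul_of_nonneg_right (hf i) (hw i)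
    _ = m := by rw [← Finset.mul_sum, hsum, mul_one]

theorem Finset.eq_zero_of_sum_mul_eq_of_sum_eq_one {ι : Type*} [Fintype ι] {w f : ι → ℝ} {m : ℝ}
    (hw : ∀ i, 0 ≤ w i) (hsum : ∑ i, w i = 1) (hf : ∀ i, f i ≤ m) (heq : ∑ i, f i * w i = m)
    {i : ι} (hi : f i < m) : w i = 0 := by
  have hzero : ∑ j, (m - f j) * w j = 0 := by
    simp only [sub_mul, Finset.sum_sub_distrib, ← Finset.mul_sum, hsum, heq, mul_one, sub_self]
  have hterm := (Finset.sum_eq_zero_iff_of_nonneg fun j _ =>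
    mul_nonneg (sub_nonneg.mpr (hf j)) (hw j)).mp hzero i (Finset.mem_univ i)
  exact (mul_eq_zero.mp hterm).resolve_left (sub_pos.mpr hi).ne'

namespace Matrix

variable {n : Type*} [Fintype n]

/-- `ℂP^{n-1}` in its Veronese–Whitney embedding: the orthogonal projections of trace one. -/
def complexProjectiveSpace (n : Type*) [Fintype n] : Set (Matrix n n ℂ) :=
  {Z | Zᴴ = Z ∧ Z * Z = Z ∧ Z.trace = 1}

def spectralSum (lam : n → ℝ) (u : n → n → ℂ) : Matrix n n ℂ :=
  ∑ j, (lam j : ℂ) • vecMulVec (u j) (star (u j))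

theorem posSemidef_of_conjTranspose_eq_of_mul_self_eq {Z : Matrix n n ℂ} (hh : Zᴴ = Z)
    (hi : Z * Z = Z) : Z.PosSemidef := by
  simpa only [hh, hi] using posSemidef_conjTranspose_mul_self Z

theorem PosSemidef.dotProduct_mulVec_eq_re {Z : Matrix n n ℂ} (hZ : Z.PosSemidef) (v : n → ℂ) :
    star v ⬝ᵥ (Z *ᵥ v) = ((star v ⬝ᵥ (Z *ᵥ v)).re : ℂ) :=
  Complex.eq_re_of_ofReal_le (r := 0) (by simpa using hZ.dotProduct_mulVec_nonneg v)

theorem re_trace_conjTranspose_mul_self_nonneg (B : Matrix n n ℂ) : 0 ≤ (Bᴴ * B).trace.re :=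
  (Complex.nonneg_iff.mp (posSemidef_conjTranspose_mul_self B).trace_nonneg).1

theorem vecMulVec_star_self_mem_complexProjectiveSpace {v : n → ℂ} (hv : star v ⬝ᵥ v = 1) :
    vecMulVec v (star v) ∈ complexProjectiveSpace n :=
  ⟨by rw [conjTranspose_vecMulVec, star_star], by rw [vecMulVec_mul_vecMulVec, hv, one_smul],
    by rw [trace_vecMulVec, dotProduct_comm, hv]⟩

theorem re_trace_conjTranspose_sub_mul_sub {A Z : Matrix n n ℂ} (hA : Aᴴ = A)
    (hZ : Z ∈ complexProjectiveSpace n) :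
    ((A - Z)ᴴ * (A - Z)).trace.re = (Aᴴ * A).trace.re + 1 - 2 * (A * Z).trace.re := by
  obtain ⟨hh, hi, ht⟩ := hZ
  have hexpand : (A - Z)ᴴ * (A - Z) = Aᴴ * A - A * Z - Z * A + Z := by
    rw [conjTranspose_sub, hh, hA, sub_mul, mul_sub, mul_sub, hi]
    abel
  rw [hexpand, trace_add, trace_sub, trace_sub, trace_mul_comm Z A, ht]
  simp only [Complex.add_re, Complex.sub_re, Complex.one_re]
  ring

theorem conjTranspose_spectralSum (lam : n → ℝ) (u : n → n → ℂ) :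
    (spectralSum lam u)ᴴ = spectralSum lam u := by
  simp [spectralSum, conjTranspose_sum, conjTranspose_smul]

theorem re_trace_spectralSum_mul (lam : n → ℝ) (u : n → n → ℂ) (Z : Matrix n n ℂ) :
    (spectralSum lam u * Z).trace.re = ∑ j, lam j * (star (u j) ⬝ᵥ (Z *ᵥ u j)).re := by
  simp only [spectralSum, Finset.sum_mul, trace_sum, smul_mul, trace_smul, trace_mul_comm _ Z,
    mul_vecMulVec, trace_vecMulVec, dotProduct_comm _ (star _), smul_eq_mul, Complex.re_sum,
    Complex.re_ofReal_mul]

variable [DecidableEq n]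

theorem mulVec_eq_self_of_dotProduct_mulVec_eq_one {Z : Matrix n n ℂ} (hh : Zᴴ = Z)
    (hi : Z * Z = Z) {v : n → ℂ} (hv : star v ⬝ᵥ v = 1) (hZv : star v ⬝ᵥ (Z *ᵥ v) = 1) :
    Z *ᵥ v = v := by
  have hP : (1 - Z).PosSemidef := posSemidef_of_conjTranspose_eq_of_mul_self_eq
    (by rw [conjTranspose_sub, conjTranspose_one, hh]) (by simp only [sub_mul, mul_sub, hi]; simp)
  have hPv := (hP.dotProduct_mulVec_zero_iff v).mp (by
    rw [sub_mulVec, one_mulVec, dotProduct_sub, hv, hZv, sub_self])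
  rw [sub_mulVec, one_mulVec, sub_eq_zero] at hPv
  exact hPv.symm

section Orthonormal

variable {u : n → n → ℂ} (horth : ∀ i j, star (u i) ⬝ᵥ u j = if i = j then 1 else 0)
include horth

theorem sum_vecMulVec_star_eq_one : ∑ j, vecMulVec (u j) (star (u j)) = 1 := by
  have h : (of u)ᵀᴴ * (of u)ᵀ = 1 := by
    ext i j
    simpa [mul_apply, dotProduct, one_apply] using horth i j
  rw [← mul_eq_one_comm.mp h]
  ext a b
  simp [mul_apply, Matrix.sum_apply, vecMulVec_apply]

theorem trace_eq_sum_dotProduct_mulVec (Z : Matrix n n ℂ) :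
    Z.trace = ∑ j, star (u j) ⬝ᵥ (Z *ᵥ u j) := by
  conv_lhs => rw [← Z.mul_one, ← sum_vecMulVec_star_eq_one horth]
  simp only [Finset.mul_sum, mul_vecMulVec, trace_sum, trace_vecMulVec, dotProduct_comm]

theorem ext_of_mulVec_eq {Z W : Matrix n n ℂ} (h : ∀ j, Z *ᵥ u j = W *ᵥ u j) : Z = W := by
  rw [← Z.mul_one, ← W.mul_one, ← sum_vecMulVec_star_eq_one horth]
  simp only [Finset.mul_sum, mul_vecMulVec, h]

theorem spectralSum_mulVec (lam : n → ℝ) (i : n) :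
    spectralSum lam u *ᵥ u i = (lam i : ℂ) • u i := by
  simp only [spectralSum, sum_mulVec, smul_mulVec, vecMulVec_mulVec, horth]
  simp

theorem re_trace_spectralSum_mul_vecMulVec_star (lam : n → ℝ) (i : n) :
    (spectralSum lam u * vecMulVec (u i) (star (u i))).trace.re = lam i := by
  rw [mul_vecMulVec, trace_vecMulVec, spectralSum_mulVec horth, dotProduct_comm,
    dotProduct_smul, horth, if_pos rfl, smul_eq_mul, mul_one, Complex.ofReal_re]

theorem sum_re_dotProduct_mulVec_eq_one {Z : Matrix n n ℂ} (ht : Z.trace = 1) :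
    ∑ j, (star (u j) ⬝ᵥ (Z *ᵥ u j)).re = 1 := by
  rw [← Complex.re_sum, ← trace_eq_sum_dotProduct_mulVec horth, ht, Complex.one_re]

theorem re_trace_spectralSum_mul_le {lam : n → ℝ} {m : ℝ} (hm : ∀ j, lam j ≤ m)
    {Z : Matrix n n ℂ} (hZ : Z ∈ complexProjectiveSpace n) :
    (spectralSum lam u * Z).trace.re ≤ m := by
  obtain ⟨hh, hi, ht⟩ := hZ
  rw [re_trace_spectralSum_mul]
  exact Finset.sum_mul_le_of_sum_eq_one
    (fun j => (posSemidef_of_conjTranspose_eq_of_mul_self_eq hh hi).re_dotProduct_nonneg (u j))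
    (sum_re_dotProduct_mulVec_eq_one horth ht) hm

theorem eq_vecMulVec_star_of_re_trace_spectralSum_mul_eq {lam : n → ℝ} {i₀ : n}
    (hsimple : ∀ j ≠ i₀, lam j < lam i₀) {Z : Matrix n n ℂ} (hZ : Z ∈ complexProjectiveSpace n)
    (heq : (spectralSum lam u * Z).trace.re = lam i₀) :
    Z = vecMulVec (u i₀) (star (u i₀)) := by
  obtain ⟨hh, hi, ht⟩ := hZ
  have hpos := posSemidef_of_conjTranspose_eq_of_mul_self_eq hh hi
  have hmax : ∀ j, lam j ≤ lam i₀ := fun j => by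
    rcases eq_or_ne j i₀ with rfl | hj
    exacts [le_rfl, (hsimple j hj).le]
  rw [re_trace_spectralSum_mul] at heq
  have hkill : ∀ j ≠ i₀, Z *ᵥ u j = 0 := fun j hj => by
    have hre := Finset.eq_zero_of_sum_mul_eq_of_sum_eq_one
      (fun j => hpos.re_dotProduct_nonneg (u j)) (sum_re_dotProduct_mulVec_eq_one horth ht)
      hmax heq (hsimple j hj)
    rw [← hpos.dotProduct_mulVec_zero_iff, hpos.dotProduct_mulVec_eq_re]
    exact_mod_cast hre
  have hfix : Z *ᵥ u i₀ = u i₀ := by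
    refine mulVec_eq_self_of_dotProduct_mulVec_eq_one hh hi (by simp [horth]) ?_
    rw [← ht, trace_eq_sum_dotProduct_mulVec horth, Finset.sum_eq_single i₀
      (fun j _ hj => by rw [hkill j hj, dotProduct_zero]) (by simp)]
  refine ext_of_mulVec_eq horth fun j => ?_
  rw [vecMulVec_mulVec, horth]
  rcases eq_or_ne i₀ j with rfl | hj
  · simp [hfix]
  · simp [hj, hkill j hj.symm]

end Orthonormal

end Matrix

theorem frobC_sub_le_frobC_sub_iff {k : ℕ} {A Z W : Matrix (Fin k) (Fin k) ℂ} (hA : Aᴴ = A)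
    (hZ : Z ∈ complexProjectiveSpace (Fin k)) (hW : W ∈ complexProjectiveSpace (Fin k)) :
    frobC (A - W) ≤ frobC (A - Z) ↔ (A * Z).trace.re ≤ (A * W).trace.re := by
  rw [frobC, frobC, Real.sqrt_le_sqrt_iff (re_trace_conjTranspose_mul_self_nonneg _),
    re_trace_conjTranspose_sub_mul_sub hA hZ, re_trace_conjTranspose_sub_mul_sub hA hW]
  constructor <;> intro h <;> linarith

/-- Let A = Σ_{j=1}^k λ_j u_j u_j* be Hermitian with
λ₁ > λ₂ ≥ ⋯ ≥ λ_k and u_j orthonormal. Then M = u₁u₁* is the unique minimizer of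
‖A − Z‖_F over CP^{k−1} = {Z : Z* = Z = Z², tr(Z) = 1}. -/
theorem complex_projective_projection_unique (k : ℕ) (hk : 1 < k)
    (lam : Fin k → ℝ) (u : Fin k → Fin k → ℂ)
    (horth : ∀ i j : Fin k, star (u i) ⬝ᵥ u j = if i = j then 1 else 0)
    (hdec : ∀ i j : Fin k, i ≤ j → lam j ≤ lam i)
    (hgap : lam ⟨1, hk⟩ < lam ⟨0, Nat.lt_of_lt_of_le Nat.one_pos hk.le⟩)
    (A : Matrix (Fin k) (Fin k) ℂ)
    (hA : A = ∑ j : Fin k, (lam j : ℂ) • vecMulVec (u j) (star (u j)))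
    (M : Matrix (Fin k) (Fin k) ℂ)
    (hM : M = vecMulVec (u ⟨0, Nat.lt_of_lt_of_le Nat.one_pos hk.le⟩)
      (star (u ⟨0, Nat.lt_of_lt_of_le Nat.one_pos hk.le⟩))) :
    (Mᴴ = M ∧ M * M = M ∧ M.trace = 1) ∧
      ∀ Z : Matrix (Fin k) (Fin k) ℂ, (Zᴴ = Z ∧ Z * Z = Z ∧ Z.trace = 1) →
        frobC (A - M) ≤ frobC (A - Z) ∧ (frobC (A - Z) = frobC (A - M) → Z = M) := by
  set i₀ : Fin k := ⟨0, Nat.lt_of_lt_of_le Nat.one_pos hk.le⟩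
  change A = spectralSum lam u at hA
  subst hA hM
  have hmax : ∀ j, lam j ≤ lam i₀ := fun j => hdec i₀ j (Nat.zero_le _)
  have hsimple : ∀ j ≠ i₀, lam j < lam i₀ := fun j hj =>
    (hdec ⟨1, hk⟩ j (Nat.one_le_iff_ne_zero.mpr fun h => hj (Fin.ext h))).trans_lt hgap
  have hAh := conjTranspose_spectralSum lam u
  have hM := vecMulVec_star_self_mem_complexProjectiveSpace (v := u i₀) (by simp [horth])
  have hAM := re_trace_spectralSum_mul_vecMulVec_star horth lam i₀
  refine ⟨hM, fun Z hZ => ?_⟩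
  have hle := hAM ▸ re_trace_spectralSum_mul_le horth hmax hZ
  refine ⟨(frobC_sub_le_frobC_sub_iff hAh hZ hM).mpr hle, fun heq => ?_⟩
  exact eq_vecMulVec_star_of_re_trace_spectralSum_mul_eq horth hsimple hZ
    (hAM ▸ le_antisymm hle ((frobC_sub_le_frobC_sub_iff hAh hM hZ).mp heq.le))
end

section
/- The objective A ↦ Σ_{i=1}^n ‖X_i − A‖_F on ℝ^{k×r} is convex, and it is strictly convex (hence has a unique minimizer) provided the points vec(X₁),…,vec(X_n) do not all lie on a single line in ℝ^{kr}. -/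
/-!
Vectorizing identifies `frob` with the Euclidean norm on `ℝ^{k×r}`, so it suffices to treat
`A ↦ ∑ᵢ ‖Xᵢ - A‖` in a strictly convex normed space. Each summand is convex by the triangle
inequality. If the convexity inequality is an equality between distinct points `x` and `y`, it
is an equality for every summand; equality in the triangle inequality forces `Xᵢ - x` and
`Xᵢ - y` onto a common ray, which puts `Xᵢ` on the line through `x` and `y`.
-/

open Matrix

open Set

theorem StrictConvexOn.comp_linearMap {𝕜 E F β : Type*} [Semiring 𝕜] [PartialOrder 𝕜]
    [AddCommMonoid E] [AddCommMonoid F] [Module 𝕜 E] [Module 𝕜 F]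
    [AddCommMonoid β] [PartialOrder β] [SMul 𝕜 β] {f : F → β} {s : Set F}
    (hf : StrictConvexOn 𝕜 s f) (g : E →ₗ[𝕜] F) (hg : Function.Injective g) :
    StrictConvexOn 𝕜 (g ⁻¹' s) (f ∘ g) :=
  ⟨hf.1.linear_preimage g, fun _ hx _ hy hxy _ _ ha hb hab => by
    simpa only [Function.comp_apply, map_add, map_smul] using hf.2 hx hy (hg.ne hxy) ha hb hab⟩

theorem sub_smul_add_smul_of_add_eq_one {R E : Type*} [Ring R] [AddCommGroup E] [Module R E]
    (z x y : E) {a b : R} (hab : a + b = 1) :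
    z - (a • x + b • y) = a • (z - x) + b • (z - y) := by
  rw [smul_sub, smul_sub, sub_add_sub_comm, ← add_smul, hab, one_smul]

theorem SameRay.exists_eq_add_smul_sub {R E : Type*} [Field R] [LinearOrder R]
    [IsStrictOrderedRing R] [AddCommGroup E] [Module R E] {x y z : E} (hxy : x ≠ y)
    (h : SameRay R (z - x) (z - y)) : ∃ t : R, z = x + t • (y - x) := by
  rcases eq_or_ne z x with rfl | hzx
  · exact ⟨0, by simp⟩
  obtain ⟨r, -, hr⟩ := h.exists_nonneg_left (sub_ne_zero.2 hzx)
  have hr1 : 1 - r ≠ 0 := by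
    rintro hr1
    obtain rfl : r = 1 := by linarith
    exact hxy (by simpa using hr)
  have hyx : (1 - r) • (z - x) = y - x := by
    rw [sub_smul, one_smul, hr]
    abel
  refine ⟨(1 - r)⁻¹, ?_⟩
  rw [← hyx, inv_smul_smul₀ hr1]
  abel

section NormedSpace

variable {E : Type*} [NormedAddCommGroup E] [NormedSpace ℝ E]

theorem norm_sub_smul_add_smul_le (z x y : E) {a b : ℝ} (ha : 0 ≤ a) (hb : 0 ≤ b)
    (hab : a + b = 1) : ‖z - (a • x + b • y)‖ ≤ a * ‖z - x‖ + b * ‖z - y‖ := by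
  rw [sub_smul_add_smul_of_add_eq_one z x y hab]
  exact convexOn_univ_norm.2 trivial trivial ha hb hab

theorem sameRay_of_norm_sub_smul_add_smul_eq [StrictConvexSpace ℝ E] {z x y : E} {a b : ℝ}
    (ha : 0 < a) (hb : 0 < b) (hab : a + b = 1)
    (h : ‖z - (a • x + b • y)‖ = a * ‖z - x‖ + b * ‖z - y‖) :
    SameRay ℝ (z - x) (z - y) := by
  rw [sub_smul_add_smul_of_add_eq_one z x y hab] at h
  have hray : SameRay ℝ (a • (z - x)) (b • (z - y)) := by
    rwa [sameRay_iff_norm_add, norm_smul, norm_smul, Real.norm_of_nonneg ha.le,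
      Real.norm_of_nonneg hb.le]
  simpa [ha.ne', hb.ne'] using (hray.pos_smul_left (inv_pos.2 ha)).pos_smul_right (inv_pos.2 hb)

theorem convexOn_sum_norm_sub {ι : Type*} (s : Finset ι) (X : ι → E) :
    ConvexOn ℝ univ fun A => ∑ i ∈ s, ‖X i - A‖ := by
  refine ⟨convex_univ, fun x _ y _ a b ha hb hab => ?_⟩
  simp only [smul_eq_mul, Finset.mul_sum, ← Finset.sum_add_distrib]
  gcongr with i
  exact norm_sub_smul_add_smul_le (X i) x y ha hb hab

theorem strictConvexOn_sum_norm_sub [StrictConvexSpace ℝ E] {ι : Type*} (s : Finset ι)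
    (X : ι → E) (hX : ¬ ∃ a b : E, ∀ i ∈ s, ∃ t : ℝ, X i = a + t • b) :
    StrictConvexOn ℝ univ fun A => ∑ i ∈ s, ‖X i - A‖ := by
  refine ⟨convex_univ, fun x _ y _ hxy a b ha hb hab => ?_⟩
  simp only [smul_eq_mul, Finset.mul_sum, ← Finset.sum_add_distrib]
  have hle : ∀ i ∈ s, ‖X i - (a • x + b • y)‖ ≤ a * ‖X i - x‖ + b * ‖X i - y‖ :=
    fun i _ => norm_sub_smul_add_smul_le (X i) x y ha.le hb.le hab
  refine Finset.sum_lt_sum hle ?_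
  by_contra! hge
  exact hX ⟨x, y - x, fun i hi => (sameRay_of_norm_sub_smul_add_smul_eq ha hb hab
    ((hle i hi).antisymm (hge i hi))).exists_eq_add_smul_sub hxy⟩

end NormedSpace

def Matrix.flattenEuclidean (m n : Type*) : Matrix m n ℝ ≃ₗ[ℝ] EuclideanSpace ℝ (m × n) :=
  (LinearEquiv.curry ℝ ℝ m n).symm.trans (WithLp.linearEquiv 2 ℝ _).symm

@[simp]
theorem Matrix.flattenEuclidean_apply {m n : Type*} (A : Matrix m n ℝ) (p : m × n) :
    Matrix.flattenEuclidean m n A p = A p.1 p.2 :=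
  rfl

theorem frob_eq_norm_flattenEuclidean {k r : ℕ} (A : Matrix (Fin k) (Fin r) ℝ) :
    frob A = ‖Matrix.flattenEuclidean _ _ A‖ := by
  rw [frob, EuclideanSpace.norm_eq, Fintype.sum_prod_type, Matrix.trace, Finset.sum_comm]
  simp [Matrix.mul_apply, sq]

/-- The objective A ↦ Σᵢ ‖Xᵢ − A‖_F on ℝ^{k×r} is convex, and it is
strictly convex (hence has a unique minimizer) provided the points X₁,…,X_n do not
all lie on a single line. -/
theorem frobenius_median_objective_convex (k r n : ℕ)
    (X : Fin n → Matrix (Fin k) (Fin r) ℝ) :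
    ConvexOn ℝ Set.univ (fun A : Matrix (Fin k) (Fin r) ℝ => ∑ i, frob (X i - A)) ∧
      ((¬ ∃ (a b : Matrix (Fin k) (Fin r) ℝ), ∀ i : Fin n, ∃ t : ℝ, X i = a + t • b) →
        StrictConvexOn ℝ Set.univ
          (fun A : Matrix (Fin k) (Fin r) ℝ => ∑ i, frob (X i - A))) := by
  set e := Matrix.flattenEuclidean (Fin k) (Fin r)
  have hobj : (fun A => ∑ i, frob (X i - A)) = (fun B => ∑ i, ‖e (X i) - B‖) ∘ e := by
    funext A
    simp only [frob_eq_norm_flattenEuclidean, Function.comp_apply, map_sub, e]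
  rw [hobj]
  refine ⟨by simpa using (convexOn_sum_norm_sub _ _).comp_linearMap e.toLinearMap, fun hX => ?_⟩
  have hline : ¬ ∃ a b, ∀ i ∈ Finset.univ, ∃ t : ℝ, e (X i) = a + t • b := by
    rintro ⟨a, b, h⟩
    refine hX ⟨e.symm a, e.symm b, fun i => ?_⟩
    obtain ⟨t, ht⟩ := h i (Finset.mem_univ i)
    exact ⟨t, by rw [← e.symm_apply_apply (X i), ht, map_add, map_smul]⟩
  simpa using (strictConvexOn_sum_norm_sub _ _ hline).comp_linearMap e.toLinearMap e.injective
end
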